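/- arXiv:2603.14386 — 4 statements merged into one kernel-verified Lean document; each statement's English description precedes it below -/
import Mathlib

section
/- Let A be an n×n real matrix, let a_0,...,a_{n-1} be the coefficients of its characteristic polynomial, let D_i be the adjugate-expansion coefficients of adj(sI-A), and define the n×n² block matrix 𝒟 := [D_0, D_1, ..., D_{n-1}]. Let A_s be the companion matrix with last row [-a_0, -a_1, ..., -a_{n-1}] (and the superdiagonal identity block above). Then A·𝒟 = 𝒟·(I_n ⊗ A_s), i.e., A·D_{i+1} = (𝒟·(I_n⊗A_s)) block-wise; equivalently A𝒟 equals 𝒟 right-multiplied by the block companion structure. -/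
open Matrix Polynomial Kronecker

/-- The `i`-th matrix coefficient `D_i` of the polynomial expansion
`adj(s I - A) = Σ_i D_i s^i`. -/
noncomputable def adjCoeff (n : ℕ) (A : Matrix (Fin n) (Fin n) ℝ) (i : ℕ) :
    Matrix (Fin n) (Fin n) ℝ :=
  Matrix.of fun k l => (((charmatrix A).adjugate) k l).coeff i

/-- The horizontal concatenation `𝒟 = [D_0, D_1, …, D_{n-1}]` of the adjugate-expansion
coefficients, an `n × n²` matrix: the column indexed by `(l, i)` is the `l`-th column of
the block `D_i`. -/
noncomputable def Dcat (n : ℕ) (A : Matrix (Fin n) (Fin n) ℝ) :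
    Matrix (Fin n) (Fin n × Fin n) ℝ :=
  Matrix.of fun k p => (adjCoeff n A p.2) k p.1

/-- The companion matrix `A_s` of the characteristic polynomial of `A`: identity on the
superdiagonal and last row `[-a_0, …, -a_{n-1}]`. -/
noncomputable def companionOf (n : ℕ) (A : Matrix (Fin n) (Fin n) ℝ) :
    Matrix (Fin n) (Fin n) ℝ :=
  Matrix.of fun i j =>
    if i.val = n - 1 then -((A.charpoly).coeff j.val)
    else if j.val = i.val + 1 then 1 else 0

variable (n : ℕ) (A : Matrix (Fin n) (Fin n) ℝ)

lemma keyEq : (X - C A) * matPolyEquiv ((charmatrix A).adjugate)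
    = (A.charpoly).map (algebraMap ℝ (Matrix (Fin n) (Fin n) ℝ)) := by
  have h := (charmatrix A).mul_adjugate
  apply_fun matPolyEquiv at h
  rwa [_root_.map_mul, matPolyEquiv_charmatrix, ← Matrix.charpoly,
    matPolyEquiv_smul_one] at h

lemma adjCoeff_eq (i : ℕ) :
    adjCoeff n A i = (matPolyEquiv ((charmatrix A).adjugate)).coeff i := by
  ext k l
  simp [adjCoeff, matPolyEquiv_coeff_apply]

lemma adjCoeff_rec (i : ℕ) :
    A * adjCoeff n A i
      = (if i = 0 then 0 else adjCoeff n A (i - 1)) - (A.charpoly.coeff i) • 1 := by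
  have h := congrArg (fun p => Polynomial.coeff p i) (keyEq n A)
  simp only [coeff_map, sub_mul, coeff_sub] at h
  rw [adjCoeff_eq, eq_sub_iff_add_eq]
  have hC : (C A * matPolyEquiv ((charmatrix A).adjugate)).coeff i
      = A * (matPolyEquiv ((charmatrix A).adjugate)).coeff i := by
    rw [coeff_C_mul]
  have hX : (X * matPolyEquiv ((charmatrix A).adjugate)).coeff i
      = (if i = 0 then 0 else adjCoeff n A (i-1)) := by
    cases i with
    | zero => simp
    | succ m => simp [coeff_X_mul, adjCoeff_eq]
  rw [hC, Algebra.algebraMap_eq_smul_one] at h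
  rw [← hX, ← h]
  abel

lemma adjCoeff_last (hn : 0 < n) : adjCoeff n A (n - 1) = 1 := by
  haveI : Nonempty (Fin n) := Fin.pos_iff_nonempty.mp hn
  set P := matPolyEquiv ((charmatrix A).adjugate) with hP
  have hq : ((A.charpoly).map
      (algebraMap ℝ (Matrix (Fin n) (Fin n) ℝ))).Monic :=
    (Matrix.charpoly_monic A).map _
  have hqdeg : ((A.charpoly).map
      (algebraMap ℝ (Matrix (Fin n) (Fin n) ℝ))).natDegree = n := by
    rw [(Matrix.charpoly_monic A).natDegree_map, Matrix.charpoly_natDegree_eq_dim,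
      Fintype.card_fin]
  have hPne : P ≠ 0 := by
    intro h0
    have := keyEq n A
    rw [← hP, h0, mul_zero] at this
    exact hq.ne_zero this.symm
  have hdeg : P.natDegree = n - 1 := by
    have h := (monic_X_sub_C A).natDegree_mul' hPne
    rw [keyEq n A, hqdeg, natDegree_X_sub_C] at h
    omega
  have h0 : adjCoeff n A n = 0 := by
    rw [adjCoeff_eq]
    exact coeff_eq_zero_of_natDegree_lt (by rw [hdeg]; omega)
  have hcn : A.charpoly.coeff n = 1 := by
    have := (Matrix.charpoly_monic A).coeff_natDegree
    rwa [Matrix.charpoly_natDegree_eq_dim, Fintype.card_fin] at this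
  have h := adjCoeff_rec n A n
  rw [h0, mul_zero, if_neg (by omega), hcn, one_smul, eq_comm, sub_eq_zero] at h
  exact h

/-- `A·𝒟 = 𝒟·(I_n ⊗ A_s)`: the adjugate-coefficient concatenation intertwines `A` with the
block companion structure `I_n ⊗ A_s`. -/
theorem Dcat_intertwine (n : ℕ) (hn : 0 < n) (A : Matrix (Fin n) (Fin n) ℝ) :
    A * Dcat n A =
      Dcat n A * ((1 : Matrix (Fin n) (Fin n) ℝ) ⊗ₖ companionOf n A) := by
  ext k li
  obtain ⟨l, i⟩ := li
  have hL : (A * Dcat n A) k (l, i) = (A * adjCoeff n A (i : ℕ)) k l := by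
    rw [mul_apply, mul_apply]; rfl
  have hR : (Dcat n A * ((1 : Matrix (Fin n) (Fin n) ℝ) ⊗ₖ companionOf n A)) k (l, i)
      = ∑ j : Fin n, adjCoeff n A (j : ℕ) k l * companionOf n A j i := by
    rw [mul_apply, Fintype.sum_prod_type, Finset.sum_comm]
    simp [Dcat, kroneckerMap_apply, one_apply, mul_ite, ite_mul, mul_comm]
  rw [hL, hR, adjCoeff_rec]
  have hsplit : ∀ j : Fin n, companionOf n A j i
      = (if (j : ℕ) = n - 1 then -(A.charpoly.coeff i) else 0)
        + (if (i : ℕ) = (j : ℕ) + 1 then 1 else 0) := by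
    intro j
    simp only [companionOf, Matrix.of_apply]
    rcases eq_or_ne (j : ℕ) (n - 1) with hj | hj
    · have hni : ¬ ((i : ℕ) = (j : ℕ) + 1) := by omega
      simp [hj, hni]
      omega
    · simp [hj]
  simp only [hsplit, mul_add, Finset.sum_add_distrib]
  have h1 : ∑ j : Fin n, adjCoeff n A (j : ℕ) k l *
      (if (j : ℕ) = n - 1 then -(A.charpoly.coeff i) else 0)
      = (1 : Matrix (Fin n) (Fin n) ℝ) k l * (-(A.charpoly.coeff i)) := by
    rw [Finset.sum_eq_single (⟨n - 1, by omega⟩ : Fin n)]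
    · simp [adjCoeff_last n A hn]
    · intro j _ hj
      have : ¬ ((j : ℕ) = n - 1) := fun h => hj (Fin.ext (by simp [h]))
      simp [this]
    · simp
  have h2 : ∑ j : Fin n, adjCoeff n A (j : ℕ) k l *
      (if (i : ℕ) = (j : ℕ) + 1 then 1 else 0)
      = if (i : ℕ) = 0 then 0 else adjCoeff n A ((i : ℕ) - 1) k l := by
    by_cases hi : (i : ℕ) = 0
    · rw [if_pos hi]
      apply Finset.sum_eq_zero
      intro j _
      have : ¬ ((i : ℕ) = (j : ℕ) + 1) := by omega
      simp [this]
    · rw [if_neg hi, Finset.sum_eq_single (⟨(i : ℕ) - 1, by omega⟩ : Fin n)]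
      · have : (i : ℕ) = ((⟨(i : ℕ) - 1, by omega⟩ : Fin n) : ℕ) + 1 := by simp; omega
        simp [← this]
      · intro j _ hj
        have : ¬ ((i : ℕ) = (j : ℕ) + 1) := by
          intro h
          exact hj (Fin.ext (by simp; omega))
        simp [this]
      · simp
  rw [h1, h2]
  by_cases hi : (i : ℕ) = 0 <;> by_cases hkl : k = l <;>
    simp [hi, hkl, Matrix.one_apply, Matrix.sub_apply, Matrix.smul_apply] <;> ring
end

section
/- Let M ∈ ℝ^{N×N}, B ∈ ℝ^{N×m}, and let F = [F_1^⊤, F_2^⊤] be orthogonal with 𝒱 = im(F_1^⊤) an M-invariant subspace containing every column of B. If the pair (M, B) is stabilizable and F_2 M F_2^⊤ is Hurwitz stable, then the projected pair (F_1 M F_1^⊤, F_1 B) is stabilizable. -/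
/-! In the orthonormal coordinates given by `F`, invariance of `im F₁ᵀ` and `im B ⊆ im F₁ᵀ` make
the pair block upper triangular: `F₂MF₁ᵀ = 0` and `F₂B = 0`. Let `Re λ ≥ 0` and let `w` be a left
eigenvector of `F₁MF₁ᵀ` for `λ` with `w F₁B = 0`. As `λ` is not an eigenvalue of the Hurwitz block
`F₂MF₂ᵀ`, the equation `u (λ - F₂MF₂ᵀ) = w F₁MF₂ᵀ` has a solution, and then `z = wF₁ + uF₂` is a
left eigenvector of `M` for `λ` with `zB = 0`. The Hautus test for `(M, B)` gives `z = 0`, so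
`w = zF₁ᵀ = 0`. -/

open Matrix

/-- Complexification of a real matrix. -/
noncomputable def cplx {a b : Type*} (M : Matrix a b ℝ) : Matrix a b ℂ :=
  M.map (fun x => (x : ℂ))

/-- Hautus test: `(M, B)` is stabilizable iff for every `λ ∈ ℂ` with `Re λ ≥ 0`
the matrix `[λI - M, B]` has full row rank. -/
def Stabilizable {N m : ℕ} (M : Matrix (Fin N) (Fin N) ℝ)
    (B : Matrix (Fin N) (Fin m) ℝ) : Prop :=
  ∀ lam : ℂ, 0 ≤ lam.re →
    (Matrix.fromCols (lam • (1 : Matrix (Fin N) (Fin N) ℂ) - cplx M) (cplx B)).rank = N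

/-- Hurwitz stability: every (complex) eigenvalue, i.e. every complex root of the
characteristic polynomial, has negative real part. -/
def Hurwitz {s : ℕ} (M : Matrix (Fin s) (Fin s) ℝ) : Prop :=
  ∀ z : ℂ, ((M.charpoly).map (algebraMap ℝ ℂ)).IsRoot z → z.re < 0

@[simp]
lemma cplx_mul {a b c : Type*} [Fintype b] (A : Matrix a b ℝ) (B : Matrix b c ℝ) :
    cplx (A * B) = cplx A * cplx B :=
  Matrix.map_mul (f := Complex.ofRealHom)

@[simp]
lemma cplx_transpose {a b : Type*} (A : Matrix a b ℝ) : cplx Aᵀ = (cplx A)ᵀ := rfl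

@[simp]
lemma cplx_add {a b : Type*} (A B : Matrix a b ℝ) : cplx (A + B) = cplx A + cplx B :=
  Matrix.map_add _ Complex.ofReal_add A B

@[simp]
lemma cplx_zero {a b : Type*} : cplx (0 : Matrix a b ℝ) = 0 :=
  Matrix.map_zero _ Complex.ofReal_zero

@[simp]
lemma cplx_one {a : Type*} [DecidableEq a] : cplx (1 : Matrix a a ℝ) = 1 :=
  Matrix.map_one _ Complex.ofReal_zero Complex.ofReal_one

lemma charpoly_cplx {n : Type*} [Fintype n] [DecidableEq n] (A : Matrix n n ℝ) :
    (cplx A).charpoly = A.charpoly.map (algebraMap ℝ ℂ) :=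
  charpoly_map A (algebraMap ℝ ℂ)

lemma Hurwitz.isUnit_smul_one_sub_cplx {s : ℕ} {A : Matrix (Fin s) (Fin s) ℝ} (hA : Hurwitz A)
    {lam : ℂ} (hlam : 0 ≤ lam.re) : IsUnit (lam • 1 - cplx A) := by
  rw [isUnit_iff_isUnit_det, isUnit_iff_ne_zero]
  intro h
  refine (hA lam ?_).not_ge hlam
  rwa [Polynomial.IsRoot, ← charpoly_cplx, eval_charpoly, scalar_apply, ← smul_one_eq_diagonal]

lemma Matrix.rank_eq_card_height_iff {K m n : Type*} [Field K] [Fintype m] [Fintype n]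
    (A : Matrix m n K) : A.rank = Fintype.card m ↔ ∀ v, v ᵥ* A = 0 → v = 0 := by
  rw [rank_eq_finrank_span_row, ← Set.finrank, eq_comm,
    ← linearIndependent_iff_card_eq_finrank_span, ← vecMul_injective_iff, ← coe_vecMulLinear, injective_iff_map_eq_zero]
  rfl

lemma Matrix.mul_eq_zero_of_col_mem_range {R l n p q : Type*} [CommSemiring R] [Fintype n]
    [Fintype q] [DecidableEq p] [Fintype p]
    {P : Matrix l n R} {Q : Matrix n q R} {A : Matrix n p R} (hPQ : P * Q = 0)
    (hA : ∀ j, (fun i => A i j) ∈ LinearMap.range Q.mulVecLin) : P * A = 0 := by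
  refine ext_of_mulVec_single fun j => ?_
  obtain ⟨y, hy⟩ := hA j
  rw [zero_mulVec, ← mulVec_mulVec, mulVec_single_one, show A.col j = Q *ᵥ y from hy.symm, mulVec_mulVec, hPQ, zero_mulVec]

def HautusAt {K n m : Type*} [Semiring K] [Fintype n] (A : Matrix n n K) (B : Matrix n m K)
    (lam : K) : Prop :=
  ∀ v : n → K, v ᵥ* A = lam • v → v ᵥ* B = 0 → v = 0

lemma rank_fromCols_eq_card_iff_hautusAt {K n m : Type*} [Field K] [Fintype n] [Fintype m]
    [DecidableEq n] (A : Matrix n n K) (B : Matrix n m K) (lam : K) :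
    (fromCols (lam • 1 - A) B).rank = Fintype.card n ↔ HautusAt A B lam := by
  rw [rank_eq_card_height_iff, HautusAt]
  simp only [vecMul_fromCols, ← Sum.elim_zero_zero, Sum.elim_eq_iff, and_imp, vecMul_sub,
    vecMul_smul, vecMul_one, sub_eq_zero, eq_comm (a := lam • _)]

lemma stabilizable_iff_hautusAt {N m : ℕ} (M : Matrix (Fin N) (Fin N) ℝ)
    (B : Matrix (Fin N) (Fin m) ℝ) :
    Stabilizable M B ↔ ∀ lam : ℂ, 0 ≤ lam.re → HautusAt (cplx M) (cplx B) lam := by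
  simp only [Stabilizable, ← rank_fromCols_eq_card_iff_hautusAt, Fintype.card_fin]

lemma HautusAt.compress {K n m r s : Type*} [CommRing K] [Fintype n] [Fintype r] [Fintype s]
    [DecidableEq n] [DecidableEq r] [DecidableEq s] {M : Matrix n n K} {B : Matrix n m K} {lam : K}
    {P₁ : Matrix r n K} {P₂ : Matrix s n K} {Q₁ : Matrix n r K} {Q₂ : Matrix n s K}
    (hQP : Q₁ * P₁ + Q₂ * P₂ = 1) (hP₁Q₁ : P₁ * Q₁ = 1) (hP₂Q₁ : P₂ * Q₁ = 0)
    (hM : P₂ * M * Q₁ = 0) (hB : P₂ * B = 0) (hD : IsUnit (lam • 1 - P₂ * M * Q₂))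
    (h : HautusAt M B lam) : HautusAt (P₁ * M * Q₁) (P₁ * B) lam := by
  intro w hw hwB
  have hP₁M : P₁ * M = P₁ * M * Q₁ * P₁ + P₁ * M * Q₂ * P₂ := by
    conv_lhs => rw [← Matrix.mul_one (P₁ * M), ← hQP]
    simp only [Matrix.mul_add, ← Matrix.mul_assoc]
  have hP₂M : P₂ * M = P₂ * M * Q₂ * P₂ := by
    conv_lhs => rw [← Matrix.mul_one (P₂ * M), ← hQP]
    simp only [Matrix.mul_add, ← Matrix.mul_assoc, hM, Matrix.zero_mul, zero_add]
  obtain ⟨u, hu⟩ : ∃ u, u ᵥ* (lam • 1 - P₂ * M * Q₂) = w ᵥ* (P₁ * M * Q₂) :=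
    vecMul_surjective_iff_isUnit.2 hD _
  rw [vecMul_sub, vecMul_smul, vecMul_one, sub_eq_iff_eq_add] at hu
  have hz : w ᵥ* P₁ + u ᵥ* P₂ = 0 := by
    refine h _ ?_ ?_
    · calc (w ᵥ* P₁ + u ᵥ* P₂) ᵥ* M = w ᵥ* (P₁ * M) + u ᵥ* (P₂ * M) := by
            rw [add_vecMul, vecMul_vecMul, vecMul_vecMul]
        _ = (w ᵥ* (P₁ * M * Q₁)) ᵥ* P₁
            + (w ᵥ* (P₁ * M * Q₂) + u ᵥ* (P₂ * M * Q₂)) ᵥ* P₂ := by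
            conv_lhs => rw [hP₁M, hP₂M]
            simp only [vecMul_add, add_vecMul, vecMul_vecMul, add_assoc]
        _ = lam • (w ᵥ* P₁ + u ᵥ* P₂) := by
            rw [hw, ← hu, smul_vecMul, smul_vecMul, smul_add]
    · rw [add_vecMul, vecMul_vecMul, vecMul_vecMul, hB, hwB, vecMul_zero, add_zero]
  calc w = (w ᵥ* P₁ + u ᵥ* P₂) ᵥ* Q₁ := by
        rw [add_vecMul, vecMul_vecMul, vecMul_vecMul, hP₁Q₁, hP₂Q₁, vecMul_one, vecMul_zero,
          add_zero]
    _ = 0 := by rw [hz, zero_vecMul]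

theorem projected_pair_stabilizable_general (N r s m : ℕ)
    (M : Matrix (Fin N) (Fin N) ℝ) (B : Matrix (Fin N) (Fin m) ℝ)
    (F1 : Matrix (Fin r) (Fin N) ℝ) (F2 : Matrix (Fin s) (Fin N) ℝ)
    (h11 : F1 * F1ᵀ = 1) (h21 : F2 * F1ᵀ = 0)
    (hcomplete : F1ᵀ * F1 + F2ᵀ * F2 = 1)
    (hinv : ∀ v ∈ LinearMap.range (F1ᵀ).mulVecLin,
      M *ᵥ v ∈ LinearMap.range (F1ᵀ).mulVecLin)
    (hBcols : ∀ j : Fin m, (fun i => B i j) ∈ LinearMap.range (F1ᵀ).mulVecLin)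
    (hstab : Stabilizable M B)
    (hHur : Hurwitz (F2 * M * F2ᵀ)) :
    Stabilizable (F1 * M * F1ᵀ) (F1 * B) := by
  have hMF : F2 * (M * F1ᵀ) = 0 := mul_eq_zero_of_col_mem_range h21 fun j => by
    have := hinv _ ⟨Pi.single j 1, rfl⟩
    rwa [mulVecLin_apply, mulVec_mulVec, mulVec_single_one] at this
  have hFB : F2 * B = 0 := mul_eq_zero_of_col_mem_range h21 hBcols
  rw [stabilizable_iff_hautusAt] at hstab ⊢
  intro lam hlam
  have hD := hHur.isUnit_smul_one_sub_cplx hlam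
  simp only [cplx_mul, cplx_transpose] at hD ⊢
  refine (hstab lam hlam).compress (Q₂ := (cplx F2)ᵀ) ?_ ?_ ?_ ?_ ?_ hD
  · simpa using congrArg cplx hcomplete
  · simpa using congrArg cplx h11
  · simpa using congrArg cplx h21
  · simpa [Matrix.mul_assoc] using congrArg cplx hMF
  · simpa using congrArg cplx hFB

/-- If `𝒱 = im(F₁ᵀ)` is `M`-invariant and contains every column of `B`, with `F = [F₁ᵀ, F₂ᵀ]`
orthogonal, `(M, B)` stabilizable and `F₂MF₂ᵀ` Hurwitz, then the projected pair
`(F₁MF₁ᵀ, F₁B)` is stabilizable. -/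
theorem projected_pair_stabilizable (N r s m : ℕ)
    (M : Matrix (Fin N) (Fin N) ℝ) (B : Matrix (Fin N) (Fin m) ℝ)
    (F1 : Matrix (Fin r) (Fin N) ℝ) (F2 : Matrix (Fin s) (Fin N) ℝ)
    (h11 : F1 * F1ᵀ = 1) (h22 : F2 * F2ᵀ = 1) (h21 : F2 * F1ᵀ = 0)
    (hcomplete : F1ᵀ * F1 + F2ᵀ * F2 = 1)
    (hinv : ∀ v ∈ LinearMap.range (F1ᵀ).mulVecLin,
      M *ᵥ v ∈ LinearMap.range (F1ᵀ).mulVecLin)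
    (hBcols : ∀ j : Fin m, (fun i => B i j) ∈ LinearMap.range (F1ᵀ).mulVecLin)
    (hstab : Stabilizable M B)
    (hHur : Hurwitz (F2 * M * F2ᵀ)) :
    Stabilizable (F1 * M * F1ᵀ) (F1 * B) :=
  projected_pair_stabilizable_general N r s m M B F1 F2 h11 h21 hcomplete hinv hBcols hstab hHur
end

section
/- Let A ∈ ℝ^{n×n}, B ∈ ℝ^{n×m}, and suppose S ∈ ℝ^{n×N}, 𝒜 ∈ ℝ^{N×N}, ℬ ∈ ℝ^{N×m} satisfy S𝒜 = AS and Sℬ = B. If K_x ∈ ℝ^{m×n} is such that A - BK_x is Hurwitz stable, and P_x ∈ 𝕊^n is the solution of the Lyapunov equation (A-BK_x)^⊤P_x + P_x(A-BK_x) + Q_x + K_x^⊤RK_x = 0, then Σ := S^⊤ P_x S solves the lifted Lyapunov equation (𝒜 - ℬK)^⊤Σ + Σ(𝒜 - ℬK) + S^⊤Q_x S + K^⊤RK = 0 with K := K_x S. -/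
open Matrix

/-- If `S𝒜 = AS`, `Sℬ = B`, `A - BKₓ` is Hurwitz and `Pₓ` solves the state-feedback
Lyapunov equation, then `Σ := Sᵀ Pₓ S` solves the lifted Lyapunov equation with `K := Kₓ S`. -/
theorem lifted_lyapunov (n m N : ℕ)
    (A : Matrix (Fin n) (Fin n) ℝ) (B : Matrix (Fin n) (Fin m) ℝ)
    (S : Matrix (Fin n) (Fin N) ℝ)
    (𝒜 : Matrix (Fin N) (Fin N) ℝ) (ℬ : Matrix (Fin N) (Fin m) ℝ)
    (Qx : Matrix (Fin n) (Fin n) ℝ) (R : Matrix (Fin m) (Fin m) ℝ)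
    (hQ : Qx.PosSemidef) (hR : R.PosDef)
    (hSA : S * 𝒜 = A * S) (hSB : S * ℬ = B)
    (Kx : Matrix (Fin m) (Fin n) ℝ) (Px : Matrix (Fin n) (Fin n) ℝ)
    (hPx : Px.IsSymm)
    (hHur : Hurwitz (A - B * Kx))
    (hlyap : (A - B * Kx)ᵀ * Px + Px * (A - B * Kx) + Qx + Kxᵀ * R * Kx = 0) :
    (𝒜 - ℬ * (Kx * S))ᵀ * (Sᵀ * Px * S) + (Sᵀ * Px * S) * (𝒜 - ℬ * (Kx * S))
      + Sᵀ * Qx * S + (Kx * S)ᵀ * R * (Kx * S) = 0 := by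
  have key : S * (𝒜 - ℬ * (Kx * S)) = (A - B * Kx) * S := by
    rw [Matrix.mul_sub, Matrix.sub_mul, hSA, ← Matrix.mul_assoc, hSB, Matrix.mul_assoc]
  have keyT : (𝒜 - ℬ * (Kx * S))ᵀ * Sᵀ = Sᵀ * (A - B * Kx)ᵀ := by
    rw [← transpose_mul, key, transpose_mul]
  have e1 : (𝒜 - ℬ * (Kx * S))ᵀ * (Sᵀ * Px * S) = Sᵀ * ((A - B * Kx)ᵀ * Px) * S := by
    rw [Matrix.mul_assoc Sᵀ Px S, ← Matrix.mul_assoc, keyT, Matrix.mul_assoc,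
      ← Matrix.mul_assoc (A - B * Kx)ᵀ, ← Matrix.mul_assoc]
  have e2 : (Sᵀ * Px * S) * (𝒜 - ℬ * (Kx * S)) = Sᵀ * (Px * (A - B * Kx)) * S := by
    rw [Matrix.mul_assoc (Sᵀ * Px), key, ← Matrix.mul_assoc, Matrix.mul_assoc Sᵀ Px,
      ← Matrix.mul_assoc, Matrix.mul_assoc]
  have e3 : (Kx * S)ᵀ * R * (Kx * S) = Sᵀ * (Kxᵀ * R * Kx) * S := by
    rw [transpose_mul]
    simp only [Matrix.mul_assoc]
  rw [e1, e2, e3]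
  have : Sᵀ * ((A - B * Kx)ᵀ * Px + Px * (A - B * Kx) + Qx + Kxᵀ * R * Kx) * S = 0 := by
    rw [hlyap, Matrix.mul_zero, Matrix.zero_mul]
  simpa only [Matrix.mul_add, Matrix.add_mul] using this
end

section
/- Let A ∈ ℝ^{n×n}, B ∈ ℝ^{n×m}, C ∈ ℝ^{p×n}, and suppose x: ℝ → ℝ^n, u: ℝ → ℝ^m are C^1 trajectories with ẋ_t = Ax_t + Bu_t and y_t = Cx_t. Fix T sampling shifts with step Δt > 0, and suppose α: ℝ → ℝ^T is differentiable with H_1(x_{(t,Δt,T)})·α_t^{(1)} = 0 for all t, where H_1(x_{(t,Δt,T)}) := [x_t, x_{t+Δt}, ..., x_{t+(T-1)Δt}]. Define x̄_t := H_1(x_{(t,Δt,T)})α_t, ū_t := H_1(u_{(t,Δt,T)})α_t, ȳ_t := H_1(y_{(t,Δt,T)})α_t. Then d/dt x̄_t = A x̄_t + B ū_t and ȳ_t = C x̄_t; i.e., (ū, ȳ) is an input–output trajectory of the system. -/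
open Matrix

/-- The delayed sample matrix `H₁(x_{(t,Δt,T)}) = [x_t, x_{t+Δt}, …, x_{t+(T-1)Δt}]`. -/
noncomputable def sampleMat {k : ℕ} (T : ℕ) (Δt : ℝ) (x : ℝ → Fin k → ℝ) (t : ℝ) :
    Matrix (Fin k) (Fin T) ℝ :=
  Matrix.of fun i j => x (t + (j : ℕ) * Δt) i

/-! Differentiating `x̄_t = H₁(x_{(t,Δt,T)}) α_t` by the product rule gives
`H₁(ẋ) α_t + H₁(x) α'_t`. The second term vanishes by hypothesis, and since every column of
`H₁(ẋ)` is `A x_s + B u_s`, the first is `A H₁(x) α_t + B H₁(u) α_t = A x̄_t + B ū_t`.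
Likewise `H₁(y) = C H₁(x)`, so `ȳ_t = C x̄_t`. -/

section

variable {k l T : ℕ} {Δt : ℝ}

theorem sampleMat_mulVec (x : ℝ → Fin k → ℝ) (t : ℝ) (a : Fin T → ℝ) :
    sampleMat T Δt x t *ᵥ a = ∑ j, a j • x (t + (j : ℕ) * Δt) := by
  ext i
  simp [sampleMat, mulVec, dotProduct, Finset.sum_apply, mul_comm]

theorem sampleMat_add (x z : ℝ → Fin k → ℝ) (t : ℝ) :
    sampleMat T Δt (fun s => x s + z s) t = sampleMat T Δt x t + sampleMat T Δt z t := rfl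

theorem sampleMat_comp_mulVec (M : Matrix (Fin l) (Fin k) ℝ) (x : ℝ → Fin k → ℝ) (t : ℝ) :
    sampleMat T Δt (fun s => M *ᵥ x s) t = M * sampleMat T Δt x t := by
  ext i j
  simp [sampleMat, mul_apply, mulVec, dotProduct]

theorem hasDerivAt_sampleMat_mulVec {x x' : ℝ → Fin k → ℝ} {α : ℝ → Fin T → ℝ}
    {a' : Fin T → ℝ} {t : ℝ}
    (hx : ∀ s, HasDerivAt x (x' s) s) (hα : HasDerivAt α a' t) :
    HasDerivAt (fun τ => sampleMat T Δt x τ *ᵥ α τ)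
      (sampleMat T Δt x' t *ᵥ α t + sampleMat T Δt x t *ᵥ a') t := by
  simp only [sampleMat_mulVec, ← Finset.sum_add_distrib]
  refine HasDerivAt.fun_sum fun j _ => ?_
  have hxj : HasDerivAt (fun τ => x (τ + (j : ℕ) * Δt)) (x' (t + (j : ℕ) * Δt)) t :=
    (hx _).comp_add_const t _
  exact (hasDerivAt_pi.mp hα j).smul hxj

end

theorem trajectory_generation_general (n m p T : ℕ)
    (A : Matrix (Fin n) (Fin n) ℝ) (B : Matrix (Fin n) (Fin m) ℝ)
    (C : Matrix (Fin p) (Fin n) ℝ)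
    (Δt : ℝ)
    (x : ℝ → Fin n → ℝ) (u : ℝ → Fin m → ℝ) (y : ℝ → Fin p → ℝ)
    (hx : ∀ t : ℝ, HasDerivAt x (A *ᵥ x t + B *ᵥ u t) t)
    (hy : ∀ t : ℝ, y t = C *ᵥ x t)
    (α α' : ℝ → Fin T → ℝ)
    (hα : ∀ t : ℝ, HasDerivAt α (α' t) t)
    (hker : ∀ t : ℝ, sampleMat T Δt x t *ᵥ α' t = 0) :
    (∀ t : ℝ, HasDerivAt (fun τ => sampleMat T Δt x τ *ᵥ α τ)
        (A *ᵥ (sampleMat T Δt x t *ᵥ α t) + B *ᵥ (sampleMat T Δt u t *ᵥ α t)) t) ∧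
    (∀ t : ℝ, sampleMat T Δt y t *ᵥ α t = C *ᵥ (sampleMat T Δt x t *ᵥ α t)) := by
  refine ⟨fun t => ?_, fun t => ?_⟩
  · have hderiv := hasDerivAt_sampleMat_mulVec (Δt := Δt) hx (hα t)
    rwa [hker, add_zero, sampleMat_add, sampleMat_comp_mulVec, sampleMat_comp_mulVec,
      add_mulVec, ← mulVec_mulVec, ← mulVec_mulVec] at hderiv
  · have hyC : y = fun s => C *ᵥ x s := funext hy
    rw [hyC, sampleMat_comp_mulVec, mulVec_mulVec]

/-- If `ẋ = Ax + Bu`, `y = Cx`, and the differentiable weighting `α` satisfies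
`H₁(x_{(t,Δt,T)}) α' = 0` for all `t`, then `x̄ := H₁(x)α`, `ū := H₁(u)α`, `ȳ := H₁(y)α`
satisfy `d/dt x̄ = A x̄ + B ū` and `ȳ = C x̄`; i.e. `(ū, ȳ)` is an input–output trajectory. -/
theorem trajectory_generation (n m p T : ℕ)
    (A : Matrix (Fin n) (Fin n) ℝ) (B : Matrix (Fin n) (Fin m) ℝ)
    (C : Matrix (Fin p) (Fin n) ℝ)
    (Δt : ℝ) (hΔt : 0 < Δt)
    (x : ℝ → Fin n → ℝ) (u : ℝ → Fin m → ℝ) (y : ℝ → Fin p → ℝ)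
    (hu : Differentiable ℝ u)
    (hx : ∀ t : ℝ, HasDerivAt x (A *ᵥ x t + B *ᵥ u t) t)
    (hy : ∀ t : ℝ, y t = C *ᵥ x t)
    (α α' : ℝ → Fin T → ℝ)
    (hα : ∀ t : ℝ, HasDerivAt α (α' t) t)
    (hker : ∀ t : ℝ, sampleMat T Δt x t *ᵥ α' t = 0) :
    (∀ t : ℝ, HasDerivAt (fun τ => sampleMat T Δt x τ *ᵥ α τ)
        (A *ᵥ (sampleMat T Δt x t *ᵥ α t) + B *ᵥ (sampleMat T Δt u t *ᵥ α t)) t) ∧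
    (∀ t : ℝ, sampleMat T Δt y t *ᵥ α t = C *ᵥ (sampleMat T Δt x t *ᵥ α t)) :=
  trajectory_generation_general n m p T A B C Δt x u y hx hy α α' hα hker
end
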